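/- arXiv:1506.04079 — 4 statements merged into one kernel-verified Lean document; each statement's English description precedes it below -/
import Mathlib

section
/- Let f and g be continuous, piecewise continuously differentiable functions on [a,b] with g(t) ≤ f(t) for all t ∈ (a,b), f(a) = g(a), f(b) = g(b), and g not identically equal to f on [a,b]. If f is convex and monotonically increasing on [a,b], then len(f) < len(g), i.e. ∫ₐᵇ √(1 + f′(t)²) dt < ∫ₐᵇ √(1 + g′(t)²) dt. -/
/-!
With `φ x = x / √(1 + x²)`, the tangent lines of the strictly convex function `x ↦ √(1 + x²)` give
`√(1 + g'²) ≥ √(1 + f'²) + φ(f') (g' - f')`, strictly where `f' ≠ g'`. Since `f` is convex,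
`φ ∘ f'` is increasing, and integrating by parts against its Stieltjes measure turns
`∫ φ(f') (g - f)'` into `∫ (f - g) dφ(f') ≥ 0`, because `g ≤ f` with equal endpoints. So the
lengths can only be equal if `f' = g'` almost everywhere, which forces `f = g`.
-/

open MeasureTheory Set Real Function

lemma abs_le_sqrt_one_add_sq (x : ℝ) : |x| ≤ √(1 + x ^ 2) :=
  abs_le_sqrt (by linarith)

lemma abs_div_sqrt_one_add_sq_le_one (x : ℝ) : |x / √(1 + x ^ 2)| ≤ 1 := by
  rw [abs_div, abs_of_pos (a := √(1 + x ^ 2)) (by positivity), div_le_one (by positivity)]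
  exact abs_le_sqrt_one_add_sq x

lemma monotone_div_sqrt_one_add_sq : Monotone fun x : ℝ => x / √(1 + x ^ 2) := by
  intro x y hxy
  have hx := sq_sqrt (by positivity : (0 : ℝ) ≤ 1 + x ^ 2)
  have hy := sq_sqrt (by positivity : (0 : ℝ) ≤ 1 + y ^ 2)
  have hx0 : 0 < √(1 + x ^ 2) := by positivity
  have hy0 : 0 < √(1 + y ^ 2) := by positivity
  dsimp only
  rw [div_le_div_iff₀ hx0 hy0]
  -- `(x √(1 + y²))² - (y √(1 + x²))² = x² - y²`, so only the signs need a case split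
  rcases le_total 0 x with h0x | hx0'
  · nlinarith [mul_nonneg h0x hy0.le, mul_nonneg (h0x.trans hxy) hx0.le]
  rcases le_total y 0 with hy0' | h0y
  · nlinarith [mul_nonpos_iff.2 (Or.inr ⟨hx0', hy0.le⟩), mul_nonpos_iff.2 (Or.inr ⟨hy0', hx0.le⟩)]
  · nlinarith [mul_nonpos_iff.2 (Or.inr ⟨hx0', hy0.le⟩), mul_nonneg h0y hx0.le]

lemma sqrt_one_add_sq_add_div_mul_sub_lt {x y : ℝ} (hxy : x ≠ y) :
    √(1 + x ^ 2) + x / √(1 + x ^ 2) * (y - x) < √(1 + y ^ 2) := by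
  have hx := sq_sqrt (by positivity : (0 : ℝ) ≤ 1 + x ^ 2)
  have hy := sq_sqrt (by positivity : (0 : ℝ) ≤ 1 + y ^ 2)
  have hx0 : 0 < √(1 + x ^ 2) := by positivity
  have hy0 : 0 < √(1 + y ^ 2) := by positivity
  have hd : 0 < (x - y) ^ 2 := by have := sub_ne_zero.2 hxy; positivity
  rw [← lt_sub_iff_add_lt', div_mul_eq_mul_div, div_lt_iff₀ hx0]
  nlinarith [mul_pos hx0 hy0]

lemma sqrt_one_add_sq_add_div_mul_sub_le (x y : ℝ) :
    √(1 + x ^ 2) + x / √(1 + x ^ 2) * (y - x) ≤ √(1 + y ^ 2) := by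
  rcases eq_or_ne x y with rfl | hxy
  · simp
  · exact (sqrt_one_add_sq_add_div_mul_sub_lt hxy).le

lemma StieltjesFunction.integral_sub_mul_eq (G : StieltjesFunction ℝ) {F : ℝ → ℝ} {a b : ℝ}
    (hab : a ≤ b) (hF : IntervalIntegrable F volume a b) :
    ∫ t in a..b, (G t - G a) * F t = ∫ s in Ioc a b, (∫ t in s..b, F t) ∂G.measure := by
  have : IsFiniteMeasure (G.measure.restrict (Ioc a b)) := ⟨by simp [G.measure_Ioc]⟩
  rw [intervalIntegrable_iff_integrableOn_Ioc_of_le hab] at hF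
  let H : ℝ → ℝ → ℝ := fun t s => (Iic t).indicator (fun _ => F t) s
  have hH : Integrable (uncurry H) ((volume.restrict (uIoc a b)).prod
      (G.measure.restrict (Ioc a b))) := by
    rw [uIoc_of_le hab]
    refine (hF.comp_fst _).mono ?_ (ae_of_all _ fun p => ?_)
    · exact hF.aestronglyMeasurable.comp_fst.indicator
        (measurableSet_le measurable_snd measurable_fst)
    · exact norm_indicator_le_norm_self (fun _ => F p.1) p.2
  have hinner_t : ∀ t ∈ Ioc a b, ∫ s in Ioc a b, H t s ∂G.measure = (G t - G a) * F t := by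
    intro t ht
    rw [integral_indicator_const _ measurableSet_Iic, smul_eq_mul, measureReal_def,
      Measure.restrict_apply measurableSet_Iic, Iic_inter_Ioc_of_le ht.2, G.measure_Ioc,
      ENNReal.toReal_ofReal (sub_nonneg.2 (G.mono ht.1.le))]
  have hinner_s : ∀ s ∈ Ioc a b, ∫ t in a..b, H t s = ∫ t in s..b, F t := by
    intro s hs
    have hHs : (fun t => H t s) = (Ici s).indicator F := by
      ext t
      simp only [H, indicator_apply, mem_Iic, mem_Ici]
    have hset : Ioc a b ∩ Ici s = Icc s b := by
      ext t
      simp only [mem_inter_iff, mem_Ioc, mem_Ici, mem_Icc]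
      grind [hs.1]
    rw [hHs, intervalIntegral.integral_of_le hab, setIntegral_indicator measurableSet_Ici, hset,
      integral_Icc_eq_integral_Ioc, intervalIntegral.integral_of_le hs.2]
  calc ∫ t in a..b, (G t - G a) * F t = ∫ t in a..b, ∫ s in Ioc a b, H t s ∂G.measure := by
        refine intervalIntegral.integral_congr_ae (ae_of_all _ fun t ht => ?_)
        rw [uIoc_of_le hab] at ht
        exact (hinner_t t ht).symm
    _ = ∫ s in Ioc a b, (∫ t in a..b, H t s) ∂G.measure := intervalIntegral_integral_swap hH
    _ = _ := setIntegral_congr_fun measurableSet_Ioc hinner_s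

lemma Monotone.intervalIntegral_mul_nonneg {ψ F : ℝ → ℝ} {a b : ℝ} (hψ : Monotone ψ)
    (hab : a ≤ b) (hF : IntervalIntegrable F volume a b) (hF0 : ∫ t in a..b, F t = 0)
    (hFs : ∀ s ∈ Ioc a b, 0 ≤ ∫ t in s..b, F t) :
    0 ≤ ∫ t in a..b, ψ t * F t := by
  set G := hψ.stieltjesFunction
  have hψG : ∀ᵐ t, ψ t = G t := by
    filter_upwards [hψ.countable_not_continuousAt.ae_notMem volume] with t ht
    exact (not_not.1 ht).continuousWithinAt.rightLim_eq.symm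
  have hGF : IntervalIntegrable (fun t => (G t - G a) * F t) volume a b := by
    rw [intervalIntegrable_iff_integrableOn_Ioc_of_le hab] at hF ⊢
    refine hF.bdd_mul (c := G b - G a)
      (G.mono.measurable.aestronglyMeasurable.sub aestronglyMeasurable_const) ?_
    filter_upwards [ae_restrict_mem measurableSet_Ioc] with t ht
    rw [Real.norm_of_nonneg (sub_nonneg.2 (G.mono ht.1.le))]
    exact sub_le_sub_right (G.mono ht.2) _
  calc 0 ≤ ∫ s in Ioc a b, (∫ t in s..b, F t) ∂G.measure := setIntegral_nonneg measurableSet_Ioc hFs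
    _ = ∫ t in a..b, ((G t - G a) * F t + G a * F t) := by
      rw [intervalIntegral.integral_add hGF (hF.const_mul _), intervalIntegral.integral_const_mul,
        hF0, mul_zero, add_zero, G.integral_sub_mul_eq hab hF]
    _ = ∫ t in a..b, ψ t * F t := by
      refine intervalIntegral.integral_congr_ae ?_
      filter_upwards [hψG] with t ht _
      rw [ht]
      ring

lemma MeasureTheory.Integrable.of_sqrt_one_add_sq {α : Type*} [MeasurableSpace α]
    {μ : Measure α} {u : α → ℝ} (hu : AEStronglyMeasurable u μ)
    (h : Integrable (fun t => √(1 + u t ^ 2)) μ) : Integrable u μ :=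
  h.mono hu (ae_of_all _ fun t => by
    simpa only [Real.norm_eq_abs, abs_of_nonneg (sqrt_nonneg _)] using abs_le_sqrt_one_add_sq (u t))

lemma MeasureTheory.AEStronglyMeasurable.of_hasDerivAt_off_countable {f f' : ℝ → ℝ}
    {s S : Set ℝ} (hs : MeasurableSet s) (hS : S.Countable)
    (hd : ∀ t ∈ s, t ∉ S → HasDerivAt f (f' t) t) : AEStronglyMeasurable f' (volume.restrict s) :=
  (measurable_deriv f).aestronglyMeasurable.congr <| by
    filter_upwards [ae_restrict_mem hs, ae_restrict_of_ae (hS.ae_notMem volume)] with t ht htS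
    exact (hd t ht htS).deriv

lemma integrableOn_Ioc_of_sqrt_one_add_sq {f f' : ℝ → ℝ} {a b : ℝ} {S : Set ℝ}
    (hS : S.Countable) (hd : ∀ t ∈ Icc a b, t ∉ S → HasDerivAt f (f' t) t)
    (h : IntegrableOn (fun t => √(1 + f' t ^ 2)) (Ioc a b)) : IntegrableOn f' (Ioc a b) :=
  h.of_sqrt_one_add_sq <|
    (AEStronglyMeasurable.of_hasDerivAt_off_countable measurableSet_Icc hS hd).mono_set
      Ioc_subset_Icc_self

lemma intervalIntegral_eq_sub_of_hasDerivAt_off_countable {h h' : ℝ → ℝ} {a b s : ℝ}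
    {S : Set ℝ} (hS : S.Countable) (hc : ContinuousOn h (Icc a b))
    (hd : ∀ t ∈ Icc a b, t ∉ S → HasDerivAt h (h' t) t) (hi : IntervalIntegrable h' volume a b)
    (hs : s ∈ Icc a b) : ∫ t in s..b, h' t = h b - h s :=
  integral_eq_of_hasDerivAt_off_countable_of_le h h' hs.2 hS (hc.mono (Icc_subset_Icc_left hs.1))
    (fun t ht => hd t ⟨hs.1.trans ht.1.1.le, ht.1.2.le⟩ ht.2)
    (hi.mono_set (uIcc_subset_uIcc (Icc_subset_uIcc hs) right_mem_uIcc))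

lemma ConvexOn.monotoneOn_of_hasDerivAt {S T : Set ℝ} {f f' : ℝ → ℝ} (hf : ConvexOn ℝ S f)
    (hT : T ⊆ S) (hd : ∀ x ∈ T, HasDerivAt f (f' x) x) : MonotoneOn f' T := by
  intro x hx y hy hxy
  rcases hxy.eq_or_lt with rfl | hlt
  · rfl
  rw [← (hd x hx).deriv, ← (hd y hy).deriv]
  exact (hf.deriv_le_slope (hT hx) (hT hy) hlt (hd x hx).differentiableAt).trans
    (hf.slope_le_deriv (hT hx) (hT hy) hlt (hd y hy).differentiableAt)

lemma ConvexOn.intervalIntegral_comp_deriv_mul_nonneg {φ f f' F : ℝ → ℝ} {a b : ℝ}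
    {S : Set ℝ} (hφ : Monotone φ) (hφl : BddBelow (range φ)) (hφu : BddAbove (range φ))
    (hf : ConvexOn ℝ (Icc a b) f) (hS : S.Countable)
    (hfd : ∀ t ∈ Icc a b, t ∉ S → HasDerivAt f (f' t) t) (hab : a ≤ b)
    (hF : IntervalIntegrable F volume a b) (hF0 : ∫ t in a..b, F t = 0)
    (hFs : ∀ s ∈ Ioc a b, 0 ≤ ∫ t in s..b, F t) :
    0 ≤ ∫ t in a..b, φ (f' t) * F t := by
  have hmono : MonotoneOn (φ ∘ f') (Icc a b \ S) :=
    hφ.comp_monotoneOn (hf.monotoneOn_of_hasDerivAt sdiff_subset fun t ht => hfd t ht.1 ht.2)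
  obtain ⟨ψ, hψ, hψeq⟩ := hmono.exists_monotone_extension
    (hφl.mono (image_subset_iff.2 fun t _ => mem_range_self (f' t)))
    (hφu.mono (image_subset_iff.2 fun t _ => mem_range_self (f' t)))
  refine (hψ.intervalIntegral_mul_nonneg hab hF hF0 hFs).trans_eq ?_
  refine intervalIntegral.integral_congr_ae ?_
  filter_upwards [hS.ae_notMem volume] with t htS ht
  rw [uIoc_of_le hab] at ht
  rw [← hψeq ⟨Ioc_subset_Icc_self ht, htS⟩, comp_apply]

lemma not_ae_eq_restrict_Ioc_of_intervalIntegral_sub_ne_zero {u v : ℝ → ℝ} {a b s : ℝ}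
    (hs : s ∈ Icc a b) (h : ∫ t in s..b, (v t - u t) ≠ 0) :
    ¬ u =ᵐ[volume.restrict (Ioc a b)] v := by
  refine fun huv => h (intervalIntegral.integral_zero_ae ?_)
  filter_upwards [(ae_restrict_iff' measurableSet_Ioc).1 huv] with t ht hts
  rw [uIoc_of_le hs.2] at hts
  rw [ht (Ioc_subset_Ioc_left hs.1 hts), sub_self]

lemma integral_sqrt_one_add_sq_lt {α : Type*} [MeasurableSpace α] {μ : Measure α}
    {u v : α → ℝ} (hu : Integrable u μ) (hv : Integrable v μ)
    (hsu : Integrable (fun t => √(1 + u t ^ 2)) μ) (hsv : Integrable (fun t => √(1 + v t ^ 2)) μ)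
    (hkey : 0 ≤ ∫ t, u t / √(1 + u t ^ 2) * (v t - u t) ∂μ) (hne : ¬ u =ᵐ[μ] v) :
    ∫ t, √(1 + u t ^ 2) ∂μ < ∫ t, √(1 + v t ^ 2) ∂μ := by
  set D : α → ℝ := fun t => √(1 + v t ^ 2) - √(1 + u t ^ 2) - u t / √(1 + u t ^ 2) * (v t - u t)
  have hD_nonneg : 0 ≤ D := fun t =>
    sub_nonneg.2 (le_sub_iff_add_le'.2 (sqrt_one_add_sq_add_div_mul_sub_le (u t) (v t)))
  have hmul : Integrable (fun t => u t / √(1 + u t ^ 2) * (v t - u t)) μ := by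
    refine (hv.sub hu).bdd_mul (c := 1) ?_ (ae_of_all _ fun t => abs_div_sqrt_one_add_sq_le_one _)
    exact (monotone_div_sqrt_one_add_sq.measurable.comp_aemeasurable
      hu.aemeasurable).aestronglyMeasurable
  have hD_int : Integrable D μ := (hsv.sub hsu).sub hmul
  have hD_pos : 0 < ∫ t, D t ∂μ := by
    refine (integral_nonneg hD_nonneg).lt_of_ne fun h => hne ?_
    filter_upwards [(integral_eq_zero_iff_of_nonneg hD_nonneg hD_int).1 h.symm] with t ht
    by_contra huv
    have := sqrt_one_add_sq_add_div_mul_sub_lt huv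
    simp only [D, Pi.zero_apply] at ht
    linarith
  have hsplit : ∫ t, D t ∂μ = ∫ t, √(1 + v t ^ 2) ∂μ - ∫ t, √(1 + u t ^ 2) ∂μ
      - ∫ t, u t / √(1 + u t ^ 2) * (v t - u t) ∂μ := by
    have hsub : Integrable (fun t => √(1 + v t ^ 2) - √(1 + u t ^ 2)) μ := hsv.sub hsu
    simp only [D]
    rw [integral_sub hsub hmul, integral_sub hsv hsu]
  linarith

theorem arclength_lt_of_convex_increasing_general
    (a b : ℝ) (hab : a < b) (f g f' g' : ℝ → ℝ)
    (hfc : ContinuousOn f (Set.Icc a b)) (hgc : ContinuousOn g (Set.Icc a b))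
    (Ff Fg : Finset ℝ)
    (hfd : ∀ t ∈ Set.Icc a b, t ∉ Ff → HasDerivAt f (f' t) t)
    (hgd : ∀ t ∈ Set.Icc a b, t ∉ Fg → HasDerivAt g (g' t) t)
    (hfint : IntervalIntegrable (fun t => Real.sqrt (1 + (f' t) ^ 2)) volume a b)
    (hgint : IntervalIntegrable (fun t => Real.sqrt (1 + (g' t) ^ 2)) volume a b)
    (hle : ∀ t ∈ Set.Ioo a b, g t ≤ f t)
    (hga : f a = g a) (hgb : f b = g b)
    (hne : ∃ t ∈ Set.Icc a b, g t ≠ f t)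
    (hconv : ConvexOn ℝ (Set.Icc a b) f) :
    (∫ t in a..b, Real.sqrt (1 + (f' t) ^ 2)) <
      ∫ t in a..b, Real.sqrt (1 + (g' t) ^ 2) := by
  rw [intervalIntegrable_iff_integrableOn_Ioc_of_le hab.le] at hfint hgint
  have hf' := integrableOn_Ioc_of_sqrt_one_add_sq Ff.countable_toSet hfd hfint
  have hg' := integrableOn_Ioc_of_sqrt_one_add_sq Fg.countable_toSet hgd hgint
  have hF : IntervalIntegrable (fun t => g' t - f' t) volume a b :=
    (intervalIntegrable_iff_integrableOn_Ioc_of_le hab.le).2 (hg'.sub hf')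
  have hftc : ∀ s ∈ Icc a b, ∫ t in s..b, (g' t - f' t) = f s - g s := fun s hs => by
    rw [intervalIntegral_eq_sub_of_hasDerivAt_off_countable (h := fun t => g t - f t)
      (Ff.countable_toSet.union Fg.countable_toSet) (hgc.sub hfc)
      (fun t ht htS => (hgd t ht fun h => htS (.inr h)).sub (hfd t ht fun h => htS (.inl h)))
      hF hs, hgb]
    ring
  have hrange : range (fun x : ℝ => x / √(1 + x ^ 2)) ⊆ Icc (-1) 1 :=
    range_subset_iff.2 fun x => abs_le.1 (abs_div_sqrt_one_add_sq_le_one x)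
  have hkey : 0 ≤ ∫ t in a..b, f' t / √(1 + f' t ^ 2) * (g' t - f' t) := by
    refine hconv.intervalIntegral_comp_deriv_mul_nonneg monotone_div_sqrt_one_add_sq
      (bddBelow_Icc.mono hrange) (bddAbove_Icc.mono hrange) Ff.countable_toSet hfd hab.le hF ?_
      fun s hs => ?_
    · rw [hftc a (left_mem_Icc.2 hab.le), hga, sub_self]
    · rw [hftc s (Ioc_subset_Icc_self hs), sub_nonneg]
      rcases hs.2.lt_or_eq with hsb | rfl
      · exact hle s ⟨hs.1, hsb⟩
      · exact hgb.ge
  obtain ⟨s, hs, hgf⟩ := hne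
  have hderiv_ne : ¬ f' =ᵐ[volume.restrict (Ioc a b)] g' :=
    not_ae_eq_restrict_Ioc_of_intervalIntegral_sub_ne_zero hs
      (by rw [hftc s hs]; exact sub_ne_zero.2 hgf.symm)
  simp only [intervalIntegral.integral_of_le hab.le] at hkey ⊢
  exact integral_sqrt_one_add_sq_lt hf' hg' hfint hgint hkey hderiv_ne

/-- let `f, g` be continuous, piecewise continuously differentiable
functions on `[a,b]` (differentiable with continuous derivative off finite sets,
with derivative functions `f', g'`), with `g ≤ f` on `(a,b)`, equal endpoints, and
`g` not identically `f`.  If `f` is convex and monotonically increasing on `[a,b]`,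
then the arc length of `f` is strictly smaller than the arc length of `g`. -/
theorem arclength_lt_of_convex_increasing
    (a b : ℝ) (hab : a < b) (f g f' g' : ℝ → ℝ)
    (hfc : ContinuousOn f (Set.Icc a b)) (hgc : ContinuousOn g (Set.Icc a b))
    (Ff Fg : Finset ℝ)
    (hfd : ∀ t ∈ Set.Icc a b, t ∉ Ff → HasDerivAt f (f' t) t)
    (hgd : ∀ t ∈ Set.Icc a b, t ∉ Fg → HasDerivAt g (g' t) t)
    (hf'c : ∀ t ∈ Set.Icc a b, t ∉ Ff → ContinuousAt f' t)
    (hg'c : ∀ t ∈ Set.Icc a b, t ∉ Fg → ContinuousAt g' t)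
    (hfint : IntervalIntegrable (fun t => Real.sqrt (1 + (f' t) ^ 2)) volume a b)
    (hgint : IntervalIntegrable (fun t => Real.sqrt (1 + (g' t) ^ 2)) volume a b)
    (hle : ∀ t ∈ Set.Ioo a b, g t ≤ f t)
    (hga : f a = g a) (hgb : f b = g b)
    (hne : ∃ t ∈ Set.Icc a b, g t ≠ f t)
    (hconv : ConvexOn ℝ (Set.Icc a b) f)
    (hmono : MonotoneOn f (Set.Icc a b)) :
    (∫ t in a..b, Real.sqrt (1 + (f' t) ^ 2)) <
      ∫ t in a..b, Real.sqrt (1 + (g' t) ^ 2) :=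
  arclength_lt_of_convex_increasing_general a b hab f g f' g' hfc hgc Ff Fg hfd hgd hfint hgint hle
    hga hgb hne hconv
end

section
/- Let B₁ and B₂ be continuous, piecewise continuously differentiable, monotonically increasing functions on [a,b] with B₁(a) = B₂(a), B₁(b) = B₂(b), and B₁(t) > B₂(t) for all t ∈ (a,b). If B₁ is convex on [a,b], then ∫ₐᵇ r⁻¹(B₁′(t)) dt < ∫ₐᵇ r⁻¹(B₂′(t)) dt; that is, the convex curve B₁ uses strictly less energy than B₂ to transmit the same amount of data. -/
/-!
Write `φ = r⁻¹`, which is strictly convex and increasing on `[0, ∞)`, and `x = B₁'`, `y = B₂'`.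
Convexity of `B₁` makes `x` nondecreasing, and `B₂ ≤ B₁` with equal endpoint values gives
`∫_U x ≤ ∫_U y` for every final segment `U` of `[a, b]`. Against the nondecreasing weight
`g = φ'₊ ∘ x` this majorization survives (layer cake: `g` is a superposition of indicators of final
segments), so `∫ g (y - x) ≥ 0` and hence `∫ φ(y) - ∫ φ(x) ≥ ∫ D_φ(y, x)`, where the Bregman
divergence `D_φ(y, x) = φ(y) - φ(x) - g (y - x)` is positive wherever `x ≠ y`. Since `g` need not be
bounded, the estimate is proved for `x` capped at `n` and passed to the limit with Fatou's lemma.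
-/

open MeasureTheory

/-- A rate function `r : [0,∞) → [0,∞)`: continuous, differentiable, strictly
increasing, strictly concave, `r 0 = 0` and `r p → ∞` as `p → ∞`. -/
structure RateFn (r : ℝ → ℝ) : Prop where
  cont : Continuous r
  diff : Differentiable ℝ r
  mono : StrictMonoOn r (Set.Ici 0)
  concave : StrictConcaveOn ℝ (Set.Ici 0) r
  zero : r 0 = 0
  nonneg : ∀ p : ℝ, 0 ≤ p → 0 ≤ r p
  tendsTop : Filter.Tendsto r Filter.atTop Filter.atTop

open Set Filter Topology
open scoped ENNReal

section Inverse

variable {f g : ℝ → ℝ} {D E : Set ℝ}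

theorem MonotoneOn.monotoneOn_of_rightInvOn (hf : MonotoneOn f D) (hg : MapsTo g E D)
    (hfg : RightInvOn g f E) : MonotoneOn g E := by
  intro y hy z hz hyz
  by_contra! h
  have : z ≤ y := hfg hz ▸ hfg hy ▸ hf (hg hz) (hg hy) h.le
  exact h.ne (by rw [le_antisymm hyz this])

theorem StrictConcaveOn.strictConvexOn_of_rightInvOn (hf : StrictConcaveOn ℝ D f)
    (hmono : MonotoneOn f D) (hE : Convex ℝ E) (hg : MapsTo g E D) (hfg : RightInvOn g f E) :
    StrictConvexOn ℝ E g := by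
  refine ⟨hE, fun y hy z hz hyz α β hα hβ hαβ => ?_⟩
  have hne : g y ≠ g z := fun h => hyz (by rw [← hfg hy, ← hfg hz, h])
  have hlt := hf.2 (hg hy) (hg hz) hne hα hβ hαβ
  rw [hfg hy, hfg hz] at hlt
  have hmem := hE hy hz hα.le hβ.le hαβ
  by_contra! hle
  have := hmono (hf.1 (hg hy) (hg hz) hα.le hβ.le hαβ) (hg hmem) hle
  rw [hfg hmem] at this
  exact (hlt.trans_le this).false

end Inverse

namespace RateFn

variable {r rinv : ℝ → ℝ}

theorem surjOn_Ici (hr : RateFn r) : SurjOn r (Ici 0) (Ici 0) := by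
  intro y hy
  obtain ⟨x, hyx, hx⟩ := ((hr.tendsTop.eventually_ge_atTop y).and (eventually_ge_atTop 0)).exists
  obtain ⟨x', hx', rfl⟩ := intermediate_value_Icc hx hr.cont.continuousOn
    (show y ∈ Icc (r 0) (r x) from ⟨hr.zero.symm ▸ hy, hyx⟩)
  exact ⟨x', hx'.1, rfl⟩

theorem mapsTo_of_leftInvOn (hr : RateFn r) (hinv : LeftInvOn rinv r (Ici 0)) :
    MapsTo rinv (Ici 0) (Ici 0) := by
  intro y hy
  obtain ⟨x, hx, rfl⟩ := hr.surjOn_Ici hy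
  rwa [hinv hx]

theorem monotoneOn_inv (hr : RateFn r) (hl : LeftInvOn rinv r (Ici 0))
    (hri : RightInvOn rinv r (Ici 0)) : MonotoneOn rinv (Ici 0) :=
  hr.mono.monotoneOn.monotoneOn_of_rightInvOn (hr.mapsTo_of_leftInvOn hl) hri

theorem strictConvexOn_inv (hr : RateFn r) (hl : LeftInvOn rinv r (Ici 0))
    (hri : RightInvOn rinv r (Ici 0)) : StrictConvexOn ℝ (Ici 0) rinv :=
  hr.concave.strictConvexOn_of_rightInvOn hr.mono.monotoneOn (convex_Ici 0)
    (hr.mapsTo_of_leftInvOn hl) hri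

end RateFn

noncomputable def bregmanDiv (φ : ℝ → ℝ) (u v : ℝ) : ℝ :=
  φ v - φ u - derivWithin φ (Ioi u) u * (v - u)

section Bregman

variable {φ : ℝ → ℝ} {S : Set ℝ} {u v : ℝ}

theorem ConvexOn.bregmanDiv_nonneg (hφ : ConvexOn ℝ S φ) (hu : u ∈ interior S) (hv : v ∈ S) :
    0 ≤ bregmanDiv φ u v := by
  rw [bregmanDiv, sub_sub, sub_nonneg]
  rcases lt_trichotomy v u with hvu | rfl | huv
  · have h := (hφ.slope_le_leftDeriv_of_mem_interior hv hu hvu).trans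
      (hφ.leftDeriv_le_rightDeriv_of_mem_interior hu)
    rw [slope_def_field, div_le_iff₀ (sub_pos.2 hvu)] at h
    nlinarith
  · simp
  · have h := hφ.rightDeriv_le_slope_of_mem_interior hu hv huv
    rw [slope_def_field, le_div_iff₀ (sub_pos.2 huv)] at h
    linarith

theorem StrictConvexOn.bregmanDiv_pos (hφ : StrictConvexOn ℝ S φ) (hu : u ∈ interior S)
    (hv : v ∈ S) (hvu : v ≠ u) : 0 < bregmanDiv φ u v := by
  rw [bregmanDiv, sub_sub, sub_pos]
  have hd := hφ.convexOn.differentiableWithinAt_Ioi_of_mem_interior hu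
  rcases hvu.lt_or_gt with hvu | huv
  · have hdl := hφ.convexOn.differentiableWithinAt_Iio_of_mem_interior hu
    have h := (hφ.slope_lt_leftDeriv hv (interior_subset hu) hvu hdl).trans_le
      (hφ.convexOn.leftDeriv_le_rightDeriv_of_mem_interior hu)
    rw [slope_def_field, div_lt_iff₀ (sub_pos.2 hvu)] at h
    nlinarith
  · have h := hφ.rightDeriv_lt_slope (interior_subset hu) hv huv hd
    rw [slope_def_field, lt_div_iff₀ (sub_pos.2 huv)] at h
    linarith

end Bregman

section LayerCake

variable {α : Type*} [MeasurableSpace α] {μ : Measure α} {s : Set α} {g : α → ℝ}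

theorem lintegral_ofReal_mul_eq_lintegral_setOf_lt [SFinite μ] {Z : α → ℝ≥0∞}
    (hZ : AEMeasurable Z μ) (hgm : AEMeasurable g μ) (hg0 : 0 ≤ᵐ[μ] g) :
    ∫⁻ t, ENNReal.ofReal (g t) * Z t ∂μ = ∫⁻ c in Ioi 0, ∫⁻ t in {t | c < g t}, Z t ∂μ := by
  have hac := withDensity_absolutelyContinuous μ Z
  simp_rw [mul_comm (ENNReal.ofReal _), ← withDensity_apply' Z]
  rw [← lintegral_eq_lintegral_meas_lt _ (hac.ae_le hg0) (hgm.mono_ac hac),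
    lintegral_withDensity_eq_lintegral_mul₀ hZ hgm.ennreal_ofReal]
  rfl

variable [Preorder α]

theorem MonotoneOn.setOf_lt_ae_eq_upperClosure (hg : MonotoneOn g s) (hs : ∀ᵐ t ∂μ, t ∈ s)
    (c : ℝ) : {t | c < g t} =ᵐ[μ] (upperClosure ({t | c < g t} ∩ s) : Set α) := by
  filter_upwards [hs] with t ht
  refine propext ⟨fun h => ⟨t, ⟨h, ht⟩, le_rfl⟩, ?_⟩
  rintro ⟨e, ⟨he, hes⟩, het⟩
  exact lt_of_lt_of_le he (hg hes ht het)

theorem lintegral_ofReal_mul_le_of_monotoneOn [SFinite μ] {X Y : α → ℝ≥0∞}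
    (hX : AEMeasurable X μ) (hY : AEMeasurable Y μ) (hs : ∀ᵐ t ∂μ, t ∈ s)
    (hg : MonotoneOn g s) (hg0 : ∀ t ∈ s, 0 ≤ g t) (hgm : AEMeasurable g μ)
    (hXY : ∀ U : Set α, IsUpperSet U → ∫⁻ t in U, X t ∂μ ≤ ∫⁻ t in U, Y t ∂μ) :
    ∫⁻ t, ENNReal.ofReal (g t) * X t ∂μ ≤ ∫⁻ t, ENNReal.ofReal (g t) * Y t ∂μ := by
  have hg0' : 0 ≤ᵐ[μ] g := by filter_upwards [hs] with t ht using hg0 t ht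
  rw [lintegral_ofReal_mul_eq_lintegral_setOf_lt hX hgm hg0',
    lintegral_ofReal_mul_eq_lintegral_setOf_lt hY hgm hg0']
  refine lintegral_mono fun c => ?_
  rw [Measure.restrict_congr_set (hg.setOf_lt_ae_eq_upperClosure hs c)]
  exact hXY _ (upperClosure _).upper

theorem integral_mul_le_of_monotoneOn [SFinite μ] {X Y : α → ℝ} {C : ℝ}
    (hX : Integrable X μ) (hY : Integrable Y μ) (hs : ∀ᵐ t ∂μ, t ∈ s)
    (hX0 : ∀ t ∈ s, 0 ≤ X t) (hY0 : ∀ t ∈ s, 0 ≤ Y t)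
    (hg : MonotoneOn g s) (hg0 : ∀ t ∈ s, 0 ≤ g t) (hgC : ∀ t ∈ s, g t ≤ C)
    (hgm : AEStronglyMeasurable g μ)
    (hXY : ∀ U : Set α, IsUpperSet U → ∫ t in U, X t ∂μ ≤ ∫ t in U, Y t ∂μ) :
    ∫ t, g t * X t ∂μ ≤ ∫ t, g t * Y t ∂μ := by
  have hgb : ∀ᵐ t ∂μ, ‖g t‖ ≤ C := by
    filter_upwards [hs] with t ht
    rw [Real.norm_of_nonneg (hg0 t ht)]
    exact hgC t ht
  have hsplit : ∀ Z : α → ℝ, (∀ t ∈ s, 0 ≤ Z t) → ∫⁻ t, ENNReal.ofReal (g t * Z t) ∂μ =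
      ∫⁻ t, ENNReal.ofReal (g t) * ENNReal.ofReal (Z t) ∂μ := fun Z hZ0 =>
    lintegral_congr_ae (by filter_upwards [hs] with t ht using ENNReal.ofReal_mul (hg0 t ht))
  have hto_lintegral : ∀ Z : α → ℝ, Integrable Z μ → (∀ t ∈ s, 0 ≤ Z t) →
      ∫ t, g t * Z t ∂μ = (∫⁻ t, ENNReal.ofReal (g t) * ENNReal.ofReal (Z t) ∂μ).toReal := by
    intro Z hZ hZ0
    rw [integral_eq_lintegral_of_nonneg_ae
      (by filter_upwards [hs] with t ht using mul_nonneg (hg0 t ht) (hZ0 t ht))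
      (hZ.bdd_mul hgm hgb).aestronglyMeasurable, hsplit Z hZ0]
  rw [hto_lintegral X hX hX0, hto_lintegral Y hY hY0]
  refine ENNReal.toReal_mono ?_ (lintegral_ofReal_mul_le_of_monotoneOn
    hX.aemeasurable.ennreal_ofReal hY.aemeasurable.ennreal_ofReal hs hg hg0 hgm.aemeasurable ?_)
  · rw [← hsplit Y hY0]
    exact (hY.bdd_mul hgm hgb).lintegral_lt_top.ne
  · intro U hU
    rw [← ofReal_integral_eq_lintegral_ofReal hX.integrableOn
        (ae_restrict_of_ae (by filter_upwards [hs] with t ht using hX0 t ht)),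
      ← ofReal_integral_eq_lintegral_ofReal hY.integrableOn
        (ae_restrict_of_ae (by filter_upwards [hs] with t ht using hY0 t ht))]
    exact ENNReal.ofReal_le_ofReal (hXY U hU)

end LayerCake

section Karamata

variable {α : Type*} [MeasurableSpace α] {μ : Measure α} {φ : ℝ → ℝ} {s : Set α} {x y : α → ℝ}

theorem integrable_comp_min [IsFiniteMeasure μ] (hφm : MonotoneOn φ (Ici 0))
    (hs : ∀ᵐ t ∂μ, t ∈ s) (hx0 : ∀ t ∈ s, 0 ≤ x t) (hφx : Integrable (fun t => φ (x t)) μ)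
    {c : ℝ} (hc : 0 ≤ c) : Integrable (fun t => φ (min (x t) c)) μ := by
  refine (hφx.inf (integrable_const (φ c))).congr ?_
  filter_upwards [hs] with t ht
  exact (hφm.map_min (hx0 t ht) hc).symm

theorem AEMeasurable.bregmanDiv {u v : α → ℝ} (hu : AEMeasurable u μ) (hv : AEMeasurable v μ)
    (hφu : AEMeasurable (fun t => φ (u t)) μ) (hφv : AEMeasurable (fun t => φ (v t)) μ) :
    AEMeasurable (fun t => bregmanDiv φ (u t) (v t)) μ :=
  (hφv.sub hφu).sub (((measurable_derivWithin_Ioi φ).comp_aemeasurable hu).mul (hv.sub hu))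

variable [Preorder α]

theorem lintegral_bregmanDiv_min_le [IsFiniteMeasure μ] (hφ : ConvexOn ℝ (Ici 0) φ)
    (hφm : MonotoneOn φ (Ici 0)) (hs : ∀ᵐ t ∂μ, t ∈ s) (hxs : MonotoneOn x s)
    (hx0 : ∀ t ∈ s, 0 < x t) (hy0 : ∀ t ∈ s, 0 ≤ y t) (hx : Integrable x μ)
    (hy : Integrable y μ) (hφx : Integrable (fun t => φ (x t)) μ)
    (hφy : Integrable (fun t => φ (y t)) μ)
    (hxy : ∀ U : Set α, IsUpperSet U → ∫ t in U, x t ∂μ ≤ ∫ t in U, y t ∂μ) {c : ℝ} (hc : 0 < c) :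
    ∫⁻ t, ENNReal.ofReal (bregmanDiv φ (min (x t) c) (y t)) ∂μ ≤
      ENNReal.ofReal (∫ t, φ (y t) ∂μ - ∫ t, φ (min (x t) c) ∂μ) := by
  set xc := fun t => min (x t) c
  set g := fun t => derivWithin φ (Ioi (xc t)) (xc t)
  have hxc0 : ∀ t ∈ s, 0 < xc t := fun t ht => lt_min (hx0 t ht) hc
  have hxc : Integrable xc μ := hx.inf (integrable_const c)
  have hφxc := integrable_comp_min hφm hs (fun t ht => (hx0 t ht).le) hφx hc.le
  have hψ_mono := interior_Ici (a := (0 : ℝ)) ▸ hφ.monotoneOn_rightDeriv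
  have hg0 : ∀ t ∈ s, 0 ≤ g t := fun t ht =>
    (hφm.mono (Ioi_subset_Ici (hxc0 t ht).le)).derivWithin_nonneg
  have hgC : ∀ t ∈ s, g t ≤ derivWithin φ (Ioi c) c := fun t ht =>
    hψ_mono (hxc0 t ht) hc (min_le_right _ _)
  have hgm : AEStronglyMeasurable g μ :=
    ((measurable_derivWithin_Ioi φ).comp_aemeasurable hxc.aemeasurable).aestronglyMeasurable
  have hgb : ∀ᵐ t ∂μ, ‖g t‖ ≤ derivWithin φ (Ioi c) c := by
    filter_upwards [hs] with t ht
    rw [Real.norm_of_nonneg (hg0 t ht)]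
    exact hgC t ht
  have habel : ∫ t, g t * xc t ∂μ ≤ ∫ t, g t * y t ∂μ := by
    refine integral_mul_le_of_monotoneOn hxc hy hs (fun t ht => (hxc0 t ht).le) hy0
      (fun t ht u hu htu => hψ_mono (hxc0 t ht) (hxc0 u hu) (min_le_min_right c (hxs ht hu htu)))
      hg0 hgC hgm fun U hU => ?_
    exact (integral_mono hxc.integrableOn hx.integrableOn fun t => min_le_left _ _).trans
      (hxy U hU)
  have hD : Integrable (fun t => bregmanDiv φ (xc t) (y t)) μ :=
    (hφy.sub hφxc).sub ((hy.sub hxc).bdd_mul hgm hgb)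
  have hD_eq : ∫ t, bregmanDiv φ (xc t) (y t) ∂μ =
      ∫ t, φ (y t) - φ (xc t) ∂μ - ∫ t, g t * (y t - xc t) ∂μ :=
    integral_sub (hφy.sub hφxc) ((hy.sub hxc).bdd_mul hgm hgb)
  have hφ_eq : ∫ t, φ (y t) - φ (xc t) ∂μ = ∫ t, φ (y t) ∂μ - ∫ t, φ (xc t) ∂μ :=
    integral_sub hφy hφxc
  have hg_eq : ∫ t, g t * (y t - xc t) ∂μ = ∫ t, g t * y t ∂μ - ∫ t, g t * xc t ∂μ := by
    simp_rw [mul_sub]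
    exact integral_sub (hy.bdd_mul hgm hgb) (hxc.bdd_mul hgm hgb)
  rw [← ofReal_integral_eq_lintegral_ofReal hD (by
    filter_upwards [hs] with t ht using hφ.bregmanDiv_nonneg (by simpa using hxc0 t ht) (hy0 t ht))]
  exact ENNReal.ofReal_le_ofReal (by linarith)

theorem StrictConvexOn.integral_comp_lt_of_monotoneOn [IsFiniteMeasure μ]
    (hφ : StrictConvexOn ℝ (Ici 0) φ) (hφm : MonotoneOn φ (Ici 0)) (hs : ∀ᵐ t ∂μ, t ∈ s)
    (hxs : MonotoneOn x s) (hx0 : ∀ t ∈ s, 0 < x t) (hy0 : ∀ t ∈ s, 0 ≤ y t)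
    (hx : Integrable x μ) (hy : Integrable y μ) (hφx : Integrable (fun t => φ (x t)) μ)
    (hφy : Integrable (fun t => φ (y t)) μ)
    (hxy : ∀ U : Set α, IsUpperSet U → ∫ t in U, x t ∂μ ≤ ∫ t in U, y t ∂μ)
    (hne : ¬ x =ᵐ[μ] y) :
    ∫ t, φ (x t) ∂μ < ∫ t, φ (y t) ∂μ := by
  have hcap : ∀ t, ∀ᶠ n : ℕ in atTop, min (x t) (n + 1) = x t := fun t => by
    obtain ⟨N, hN⟩ := exists_nat_ge (x t)
    filter_upwards [eventually_ge_atTop N] with n hn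
    exact min_eq_left (hN.trans (by exact_mod_cast hn.trans (Nat.le_succ n)))
  have hφxn : ∀ n : ℕ, Integrable (fun t => φ (min (x t) (n + 1))) μ := fun n =>
    integrable_comp_min hφm hs (fun t ht => (hx0 t ht).le) hφx (by positivity)
  have hlim : Tendsto (fun n : ℕ => ∫ t, φ (min (x t) (n + 1)) ∂μ) atTop (𝓝 (∫ t, φ (x t) ∂μ)) := by
    refine integral_tendsto_of_tendsto_of_monotone hφxn hφx ?_ ?_
    · filter_upwards [hs] with t ht m n hmn
      exact hφm (le_min (hx0 t ht).le (by positivity)) (le_min (hx0 t ht).le (by positivity))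
        (min_le_min_left _ (by exact_mod_cast Nat.add_le_add_right hmn 1))
    · exact Eventually.of_forall fun t =>
        tendsto_const_nhds.congr' ((hcap t).mono fun n h => by simp only [h])
  have hfatou : ∫⁻ t, ENNReal.ofReal (bregmanDiv φ (x t) (y t)) ∂μ ≤
      ENNReal.ofReal (∫ t, φ (y t) ∂μ - ∫ t, φ (x t) ∂μ) :=
    calc ∫⁻ t, ENNReal.ofReal (bregmanDiv φ (x t) (y t)) ∂μ
        = ∫⁻ t, liminf (fun n : ℕ => ENNReal.ofReal
            (bregmanDiv φ (min (x t) (n + 1)) (y t))) atTop ∂μ :=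
          lintegral_congr fun t => (tendsto_const_nhds.congr'
            ((hcap t).mono fun n h => by simp only [h])).liminf_eq.symm
      _ ≤ liminf (fun n : ℕ => ∫⁻ t, ENNReal.ofReal
            (bregmanDiv φ (min (x t) (n + 1)) (y t)) ∂μ) atTop :=
          lintegral_liminf_le' fun n => (AEMeasurable.bregmanDiv
            (hx.aemeasurable.min aemeasurable_const) hy.aemeasurable (hφxn n).aemeasurable
            hφy.aemeasurable).ennreal_ofReal
      _ ≤ liminf (fun n : ℕ => ENNReal.ofReal
            (∫ t, φ (y t) ∂μ - ∫ t, φ (min (x t) (n + 1)) ∂μ)) atTop :=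
          liminf_le_liminf (Eventually.of_forall fun n => lintegral_bregmanDiv_min_le
            hφ.convexOn hφm hs hxs hx0 hy0 hx hy hφx hφy hxy (by positivity))
      _ = ENNReal.ofReal (∫ t, φ (y t) ∂μ - ∫ t, φ (x t) ∂μ) :=
          ((ENNReal.continuous_ofReal.tendsto _).comp (tendsto_const_nhds.sub hlim)).liminf_eq
  have hpos : ∫⁻ t, ENNReal.ofReal (bregmanDiv φ (x t) (y t)) ∂μ ≠ 0 := by
    rw [Ne, lintegral_eq_zero_iff' (AEMeasurable.bregmanDiv hx.aemeasurable hy.aemeasurable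
      hφx.aemeasurable hφy.aemeasurable).ennreal_ofReal]
    refine fun h => hne ?_
    filter_upwards [h, hs] with t ht hts
    by_contra hxy
    have := hφ.bregmanDiv_pos (by simpa using hx0 t hts) (hy0 t hts) (Ne.symm hxy)
    simp only [Pi.zero_apply, ENNReal.ofReal_eq_zero] at ht
    linarith
  have := (pos_iff_ne_zero.2 hpos).trans_le hfatou
  rwa [ENNReal.ofReal_pos, sub_pos] at this

end Karamata

theorem IsUpperSet.exists_restrict_Ioc_eq {μ : Measure ℝ} [NullSingletonClass μ] {U : Set ℝ}
    (hU : IsUpperSet U) {a b : ℝ} (hab : a ≤ b) :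
    ∃ c ∈ Icc a b, (μ.restrict (Ioc a b)).restrict U = μ.restrict (Ioc c b) := by
  rw [Measure.restrict_restrict' measurableSet_Ioc]
  by_cases hne : (U ∩ Ioc a b).Nonempty
  swap
  · exact ⟨b, ⟨hab, le_rfl⟩, by rw [not_nonempty_iff_eq_empty.1 hne, Ioc_self]⟩
  have hbdd : BddBelow (U ∩ Ioc a b) := ⟨a, fun t ht => ht.2.1.le⟩
  set c := sInf (U ∩ Ioc a b)
  have hac : a ≤ c := le_csInf hne fun t ht => ht.2.1.le
  have hcU : Ioc c b ⊆ U ∩ Ioc a b := fun t ht => by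
    obtain ⟨e, he, het⟩ := exists_lt_of_csInf_lt hne ht.1
    exact ⟨hU het.le he.1, he.2.1.trans het, ht.2⟩
  have hUc : U ∩ Ioc a b ⊆ Icc c b := fun t ht => ⟨csInf_le hbdd ht, ht.2.2⟩
  obtain ⟨t, ht⟩ := hne
  refine ⟨c, ⟨hac, (csInf_le hbdd ht).trans ht.2.2⟩, Measure.restrict_congr_set ?_⟩
  exact (hUc.eventuallyLE.trans Ioc_ae_eq_Icc.symm.le).antisymm hcU.eventuallyLE

theorem Set.Countable.ae_restrict_Ioc_mem_Ioo_diff {μ : Measure ℝ} [NullSingletonClass μ]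
    {F : Set ℝ} (hF : F.Countable) (a b : ℝ) : ∀ᵐ t ∂μ.restrict (Ioc a b), t ∈ Ioo a b \ F := by
  filter_upwards [ae_restrict_mem measurableSet_Ioc, ae_restrict_of_ae ((hF.insert b).ae_notMem μ)]
    with t ht htF
  exact ⟨⟨ht.1, ht.2.lt_of_ne fun h => htF (.inl h)⟩, fun h => htF (.inr h)⟩

section DataCurve

variable {a b : ℝ} {B B' : ℝ → ℝ} {F : Set ℝ}

theorem HasDerivAt.nonneg_of_monotoneOn_Icc {t B't : ℝ} (hab : a < b) (ht : t ∈ Icc a b)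
    (hB : MonotoneOn B (Icc a b)) (hd : HasDerivAt B B't t) : 0 ≤ B't :=
  hd.hasDerivWithinAt.derivWithin (uniqueDiffOn_Icc hab t ht) ▸ hB.derivWithin_nonneg

theorem ConvexOn.monotoneOn_of_hasDerivAt_s11 {S T : Set ℝ} (hB : ConvexOn ℝ S B) (hTS : T ⊆ S)
    (hd : ∀ t ∈ T, HasDerivAt B (B' t) t) : MonotoneOn B' T := by
  intro u hu v hv huv
  rcases huv.eq_or_lt with rfl | huv
  · rfl
  exact (hB.le_slope_of_hasDerivAt (hTS hu) (hTS hv) huv (hd u hu)).trans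
    (hB.slope_le_of_hasDerivAt (hTS hu) (hTS hv) huv (hd v hv))

theorem ConvexOn.pos_of_hasDerivAt {S : Set ℝ} {c t B't : ℝ} (hB : ConvexOn ℝ S B) (hc : c ∈ S)
    (ht : t ∈ S) (hct : c < t) (hBct : B c < B t) (hd : HasDerivAt B B't t) : 0 < B't := by
  refine lt_of_lt_of_le ?_ (hB.slope_le_of_hasDerivAt hc ht hct hd)
  rw [slope_def_field]
  exact div_pos (sub_pos.2 hBct) (sub_pos.2 hct)

theorem MonotoneOn.integrableOn_Ioc_of_hasDerivAt (hab : a ≤ b) (hB : MonotoneOn B (Icc a b))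
    (hF : F.Countable) (hd : ∀ t ∈ Icc a b, t ∉ F → HasDerivAt B (B' t) t) :
    IntegrableOn B' (Ioc a b) := by
  refine (intervalIntegrable_iff_integrableOn_Ioc_of_le hab).1
    ((uIcc_of_le hab ▸ hB).intervalIntegrable_deriv) |>.congr_fun_ae ?_
  filter_upwards [ae_restrict_mem measurableSet_Ioc, ae_restrict_of_ae (hF.ae_notMem volume)]
    with t ht htF
  exact (hd t (Ioc_subset_Icc_self ht) htF).deriv

theorem setIntegral_Ioc_eq_sub_of_hasDerivAt {c : ℝ} (hc : c ∈ Icc a b)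
    (hBc : ContinuousOn B (Icc a b)) (hF : F.Countable)
    (hd : ∀ t ∈ Icc a b, t ∉ F → HasDerivAt B (B' t) t) (hint : IntegrableOn B' (Ioc a b)) :
    ∫ t in Ioc c b, B' t = B b - B c := by
  rw [← intervalIntegral.integral_of_le hc.2]
  exact integral_eq_of_hasDerivAt_off_countable_of_le B B' hc.2 hF
    (hBc.mono (Icc_subset_Icc_left hc.1)) (fun t ht => hd t ⟨hc.1.trans ht.1.1.le, ht.1.2.le⟩ ht.2)
    ((intervalIntegrable_iff_integrableOn_Ioc_of_le hc.2).2
      (hint.mono_set (Ioc_subset_Ioc_left hc.1)))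

end DataCurve

theorem convex_data_curve_uses_less_energy_general
    (r rinv : ℝ → ℝ) (hr : RateFn r)
    (hrinv_left : ∀ x : ℝ, 0 ≤ x → rinv (r x) = x)
    (hrinv_right : ∀ y : ℝ, 0 ≤ y → r (rinv y) = y)
    (a b : ℝ) (hab : a < b) (B₁ B₂ B₁' B₂' : ℝ → ℝ)
    (hB₁c : ContinuousOn B₁ (Set.Icc a b)) (hB₂c : ContinuousOn B₂ (Set.Icc a b))
    (F₁ F₂ : Finset ℝ)
    (hB₁d : ∀ t ∈ Set.Icc a b, t ∉ F₁ → HasDerivAt B₁ (B₁' t) t)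
    (hB₂d : ∀ t ∈ Set.Icc a b, t ∉ F₂ → HasDerivAt B₂ (B₂' t) t)
    (hB₁mono : MonotoneOn B₁ (Set.Icc a b)) (hB₂mono : MonotoneOn B₂ (Set.Icc a b))
    (hB₁int : IntervalIntegrable (fun t => rinv (B₁' t)) volume a b)
    (hB₂int : IntervalIntegrable (fun t => rinv (B₂' t)) volume a b)
    (heqa : B₁ a = B₂ a) (heqb : B₁ b = B₂ b)
    (hgt : ∀ t ∈ Set.Ioo a b, B₂ t < B₁ t)
    (hconv : ConvexOn ℝ (Set.Icc a b) B₁) :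
    (∫ t in a..b, rinv (B₁' t)) < ∫ t in a..b, rinv (B₂' t) := by
  have hφ := hr.strictConvexOn_inv (fun x hx => hrinv_left x hx) fun y hy => hrinv_right y hy
  have hφm := hr.monotoneOn_inv (fun x hx => hrinv_left x hx) fun y hy => hrinv_right y hy
  set s := Ioo a b \ (↑F₁ ∪ ↑F₂)
  have hs : ∀ᵐ t ∂volume.restrict (Ioc a b), t ∈ s :=
    (F₁.countable_toSet.union F₂.countable_toSet).ae_restrict_Ioc_mem_Ioo_diff a b
  have hd₁ : ∀ t ∈ s, HasDerivAt B₁ (B₁' t) t := fun t ht =>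
    hB₁d t (Ioo_subset_Icc_self ht.1) fun h => ht.2 (.inl h)
  have hd₂ : ∀ t ∈ s, HasDerivAt B₂ (B₂' t) t := fun t ht =>
    hB₂d t (Ioo_subset_Icc_self ht.1) fun h => ht.2 (.inr h)
  have hi₁ := hB₁mono.integrableOn_Ioc_of_hasDerivAt hab.le F₁.countable_toSet hB₁d
  have hi₂ := hB₂mono.integrableOn_Ioc_of_hasDerivAt hab.le F₂.countable_toSet hB₂d
  have hgap : ∀ c ∈ Icc a b,
      (∫ t in Ioc c b, B₁' t) + (B₁ c - B₂ c) = ∫ t in Ioc c b, B₂' t := by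
    intro c hc
    have h₁ := setIntegral_Ioc_eq_sub_of_hasDerivAt hc hB₁c F₁.countable_toSet hB₁d hi₁
    have h₂ := setIntegral_Ioc_eq_sub_of_hasDerivAt hc hB₂c F₂.countable_toSet hB₂d hi₂
    linarith
  have hle : ∀ c ∈ Icc a b, B₂ c ≤ B₁ c := fun c hc => by
    rcases eq_endpoints_or_mem_Ioo_of_mem_Icc hc with rfl | rfl | hc
    exacts [heqa.ge, heqb.ge, (hgt c hc).le]
  rw [intervalIntegral.integral_of_le hab.le, intervalIntegral.integral_of_le hab.le]
  refine hφ.integral_comp_lt_of_monotoneOn hφm hs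
    (hconv.monotoneOn_of_hasDerivAt_s11 (fun t ht => Ioo_subset_Icc_self ht.1) hd₁) (fun t ht => ?_)
    (fun t ht => (hd₂ t ht).nonneg_of_monotoneOn_Icc hab (Ioo_subset_Icc_self ht.1) hB₂mono)
    hi₁ hi₂ hB₁int.1 hB₂int.1 (fun U hU => ?_) fun h => ?_
  · have hBat := hB₂mono (left_mem_Icc.2 hab.le) (Ioo_subset_Icc_self ht.1) ht.1.1.le
    exact hconv.pos_of_hasDerivAt (left_mem_Icc.2 hab.le) (Ioo_subset_Icc_self ht.1) ht.1.1
      (by linarith [hgt t ht.1]) (hd₁ t ht)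
  · obtain ⟨c, hc, hμ⟩ := hU.exists_restrict_Ioc_eq (μ := volume) hab.le
    rw [hμ]
    linarith [hgap c hc, hle c hc]
  · have hm : (a + b) / 2 ∈ Ioo a b := ⟨by linarith, by linarith⟩
    have := integral_congr_ae (ae_restrict_of_ae_restrict_of_subset
      (Ioc_subset_Ioc_left hm.1.le) h)
    linarith [hgap _ (Ioo_subset_Icc_self hm), hgt _ hm]

/-- among two continuous, piecewise continuously differentiable,
monotonically increasing data curves on `[a,b]` with the same endpoints, with
`B₁ > B₂` on the interior, if `B₁` is convex then `B₁` uses strictly less energy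
(`∫ r⁻¹(B′)`) than `B₂`. -/
theorem convex_data_curve_uses_less_energy
    (r rinv : ℝ → ℝ) (hr : RateFn r)
    (hrinv_left : ∀ x : ℝ, 0 ≤ x → rinv (r x) = x)
    (hrinv_right : ∀ y : ℝ, 0 ≤ y → r (rinv y) = y)
    (a b : ℝ) (hab : a < b) (B₁ B₂ B₁' B₂' : ℝ → ℝ)
    (hB₁c : ContinuousOn B₁ (Set.Icc a b)) (hB₂c : ContinuousOn B₂ (Set.Icc a b))
    (F₁ F₂ : Finset ℝ)
    (hB₁d : ∀ t ∈ Set.Icc a b, t ∉ F₁ → HasDerivAt B₁ (B₁' t) t)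
    (hB₂d : ∀ t ∈ Set.Icc a b, t ∉ F₂ → HasDerivAt B₂ (B₂' t) t)
    (hB₁'c : ∀ t ∈ Set.Icc a b, t ∉ F₁ → ContinuousAt B₁' t)
    (hB₂'c : ∀ t ∈ Set.Icc a b, t ∉ F₂ → ContinuousAt B₂' t)
    (hB₁mono : MonotoneOn B₁ (Set.Icc a b)) (hB₂mono : MonotoneOn B₂ (Set.Icc a b))
    (hB₁int : IntervalIntegrable (fun t => rinv (B₁' t)) volume a b)
    (hB₂int : IntervalIntegrable (fun t => rinv (B₂' t)) volume a b)
    (heqa : B₁ a = B₂ a) (heqb : B₁ b = B₂ b)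
    (hgt : ∀ t ∈ Set.Ioo a b, B₂ t < B₁ t)
    (hconv : ConvexOn ℝ (Set.Icc a b) B₁) :
    (∫ t in a..b, rinv (B₁' t)) < ∫ t in a..b, rinv (B₂' t) :=
  convex_data_curve_uses_less_energy_general r rinv hr hrinv_left hrinv_right a b hab B₁ B₂ B₁' B₂'
    hB₁c hB₂c F₁ F₂ hB₁d hB₂d hB₁mono hB₂mono hB₁int hB₂int heqa heqb hgt hconv
end

section
/- Let p_on be an online policy, let t_n ∈ [0,T), and assume B_s is continuously differentiable on [t_n, T] with 0 ≤ B_s′(t) ≤ M there, and that p_on follows the data branch on (t_n, T), i.e. r(p_on(t)) = (B_s(t) − B_on(t)) / (T − t + ε) for all t ∈ (t_n, T). Then B_s(T) − B_on(T) = ∫_{t_n}^{T} (ε/(T−t+ε)) B_s′(t) dt + (ε/(T−t_n+ε)) (B_s(t_n) − B_on(t_n)). Consequently, 0 ≤ B_s(T) − B_on(T) ≤ ε·M·log((T−t_n+ε)/ε) + (ε/(T−t_n+ε))·B_s(t_n), which tends to 0 as ε → 0⁺; i.e. in the limit ε → 0 the online policy transmits all the arrived data. -/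
open MeasureTheory

/-- The transmitted energy curve of a policy. -/
noncomputable def eCurve (p : ℝ → ℝ) (t : ℝ) : ℝ := ∫ s in (0 : ℝ)..t, p s

/-- The transmitted data curve of a policy. -/
noncomputable def bCurve (r p : ℝ → ℝ) (t : ℝ) : ℝ := ∫ s in (0 : ℝ)..t, r (p s)

/-- A feasible (offline) policy on `[0,T]`: nonnegative, piecewise continuous,
satisfying energy and data causality. -/
def Feasible (r Es Bs : ℝ → ℝ) (T : ℝ) (p : ℝ → ℝ) : Prop :=
  (∀ t ∈ Set.Icc (0 : ℝ) T, 0 ≤ p t) ∧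
  (∃ F : Finset ℝ, ∀ t ∈ Set.Icc (0 : ℝ) T, t ∉ F → ContinuousAt p t) ∧
  ∀ t ∈ Set.Icc (0 : ℝ) T, eCurve p t ≤ Es t ∧ bCurve r p t ≤ Bs t

/-- An online policy on `[0,T)` with parameter `ε > 0`: a nonnegative piecewise
continuous function which, at each of its continuity points, equals the minimum of
the data branch `r⁻¹((B_s(t) − B_on(t))/(T − t + ε))` and the energy branch
`(E_s(t) − E_on(t))/(T − t + ε)`. -/
def IsOnline (r rinv Es Bs : ℝ → ℝ) (T ε : ℝ) (p : ℝ → ℝ) : Prop :=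
  (∀ t ∈ Set.Ico (0 : ℝ) T, 0 ≤ p t) ∧
  (∃ F : Finset ℝ, ∀ t ∈ Set.Ico (0 : ℝ) T, t ∉ F → ContinuousAt p t) ∧
  ∀ t ∈ Set.Ico (0 : ℝ) T, ContinuousAt p t →
    p t = min (rinv ((Bs t - bCurve r p t) / (T - t + ε)))
              ((Es t - eCurve p t) / (T - t + ε))

/-!
Along the data branch the backlog `D = B_s − B_on` solves the linear equation
`D' = B_s' − D / (T − t + ε)`, so `D / (T − t + ε)` has derivative `B_s' / (T − t + ε)`;
integrating over `[t_n, T]` gives the identity. The backlog is `(T − t + ε)` times a rate, hence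
nonnegative, and the bound follows from `B_s' ≤ M` and `∫ (T − t + ε)⁻¹ = log ((T − t_n + ε) / ε)`.
Everything rests on `r ∘ p_on` being integrable, which holds because the energy branch caps
`p_on` by `E_s(T) / ε`.
-/

open Set Filter Topology MeasureTheory intervalIntegral

lemma integrableOn_Ioc_of_continuousAt_of_abs_le {f : ℝ → ℝ} {a b C : ℝ} (F : Finset ℝ)
    (hcont : ∀ t ∈ Ioo a b, t ∉ F → ContinuousAt f t)
    (hbound : ∀ t ∈ Ioo a b, t ∉ F → |f t| ≤ C) :
    IntegrableOn f (Ioc a b) := by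
  have hs : MeasurableSet (Ioo a b \ F) := measurableSet_Ioo.diff F.finite_toSet.measurableSet
  have hs_ae : Ioo a b \ (F : Set ℝ) =ᵐ[volume] Ioc a b :=
    (sdiff_null_ae_eq_self (F.finite_toSet.measure_zero volume)).trans Ioo_ae_eq_Ioc
  refine IntegrableOn.congr_set_ae ?_ hs_ae.symm
  refine .of_bound (measure_mono sdiff_subset |>.trans_lt measure_Ioo_lt_top)
    (ContinuousOn.aestronglyMeasurable (fun t ht => ?_) hs) C
    ((ae_restrict_iff' hs).2 (Eventually.of_forall fun t ht => hbound t ht.1 ht.2))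
  exact (hcont t ht.1 ht.2).continuousWithinAt

lemma integral_nonneg_of_nonneg_Ico {f : ℝ → ℝ} {T t : ℝ} (hf : ∀ s ∈ Ico 0 T, 0 ≤ f s)
    (ht : t ∈ Ico 0 T) : 0 ≤ ∫ s in 0..t, f s :=
  integral_nonneg ht.1 fun s hs => hf s ⟨hs.1, hs.2.trans_lt ht.2⟩

section OnlinePolicy

variable {r rinv Es Bs p : ℝ → ℝ} {T ε : ℝ}

lemma IsOnline.le_div_of_continuousAt (hon : IsOnline r rinv Es Bs T ε p) (hε : 0 < ε)
    (hEs : MonotoneOn Es (Icc 0 T)) {t : ℝ} (ht : t ∈ Ico 0 T) (hc : ContinuousAt p t) :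
    p t ≤ Es T / ε := by
  obtain ⟨hp0, -, hmin⟩ := hon
  have hu : 0 < T - t + ε := by linarith [ht.2]
  have henergy : p t * (T - t + ε) ≤ Es t - eCurve p t := by
    rw [← le_div_iff₀ hu, hmin t ht hc]
    exact min_le_right _ _
  rw [le_div_iff₀ hε]
  calc p t * ε ≤ p t * (T - t + ε) := by gcongr; exacts [hp0 t ht, by linarith [ht.2]]
    _ ≤ Es t - eCurve p t := henergy
    _ ≤ Es T := by
      have hE : 0 ≤ eCurve p t := integral_nonneg_of_nonneg_Ico hp0 ht
      have hEs_le : Es t ≤ Es T := hEs ⟨ht.1, ht.2.le⟩ ⟨ht.1.trans ht.2.le, le_rfl⟩ ht.2.le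
      linarith

lemma IsOnline.integrableOn_rate (hon : IsOnline r rinv Es Bs T ε p) (hr : RateFn r)
    (hε : 0 < ε) (hEs : MonotoneOn Es (Icc 0 T)) :
    IntegrableOn (fun s => r (p s)) (Ioc 0 T) := by
  obtain ⟨F, hF⟩ := hon.2.1
  refine integrableOn_Ioc_of_continuousAt_of_abs_le F (C := r (Es T / ε))
    (fun t ht htF => hr.cont.continuousAt.comp (hF t (Ioo_subset_Ico_self ht) htF))
    fun t ht htF => ?_
  have ht' : t ∈ Ico 0 T := Ioo_subset_Ico_self ht
  have hp : 0 ≤ p t := hon.1 t ht'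
  have hle : p t ≤ Es T / ε := hon.le_div_of_continuousAt hε hEs ht' (hF t ht' htF)
  rw [abs_of_nonneg (hr.nonneg _ hp)]
  exact hr.mono.monotoneOn hp (hp.trans hle) hle

lemma continuousOn_bCurve (hint : IntegrableOn (fun s => r (p s)) (Ioc 0 T)) (hT : 0 ≤ T) :
    ContinuousOn (bCurve r p) (Icc 0 T) := by
  have := continuousOn_primitive_interval (μ := volume) (a := 0) (b := T) (f := fun s => r (p s))
    (by rwa [uIcc_of_le hT, integrableOn_Icc_iff_integrableOn_Ioc])
  rwa [uIcc_of_le hT] at this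

lemma hasDerivAt_bCurve (hint : IntegrableOn (fun s => r (p s)) (Ioc 0 T)) {t : ℝ}
    (ht : t ∈ Ioo 0 T) (hc : ContinuousAt (fun s => r (p s)) t) :
    HasDerivAt (bCurve r p) (r (p t)) t :=
  integral_hasDerivAt_right
    ((intervalIntegrable_iff_integrableOn_Ioc_of_le ht.1.le).2
      (hint.mono_set (Ioc_subset_Ioc_right ht.2.le)))
    ⟨Ioo 0 T, Ioo_mem_nhds ht.1 ht.2, (hint.mono_set Ioo_subset_Ioc_self).aestronglyMeasurable⟩
    hc

/-- On the data branch the rate equals a quotient of continuous functions, so it is continuous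
there and `B_on' = r ∘ p`. -/
lemma hasDerivAt_backlog_of_data_branch {Bs' : ℝ → ℝ} {a : ℝ}
    (hint : IntegrableOn (fun s => r (p s)) (Ioc 0 T)) (ha : 0 ≤ a) (hε : 0 < ε)
    (hBs : ∀ t ∈ Ioo a T, HasDerivAt Bs (Bs' t) t)
    (hbranch : ∀ t ∈ Ioo a T, r (p t) = (Bs t - bCurve r p t) / (T - t + ε))
    {t : ℝ} (ht : t ∈ Ioo a T) :
    HasDerivAt (fun s => Bs s - bCurve r p s)
      (Bs' t - (Bs t - bCurve r p t) / (T - t + ε)) t := by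
  have ht0 : t ∈ Ioo 0 T := ⟨ha.trans_lt ht.1, ht.2⟩
  have hB : ContinuousAt (bCurve r p) t :=
    (continuousOn_bCurve hint (ht0.1.trans ht0.2).le).continuousAt (Icc_mem_nhds ht0.1 ht0.2)
  have hquot : ContinuousAt (fun s => (Bs s - bCurve r p s) / (T - s + ε)) t :=
    ((hBs t ht).continuousAt.sub hB).div (by fun_prop) (by linarith [ht.2])
  have hrate : ContinuousAt (fun s => r (p s)) t :=
    hquot.congr (eventually_of_mem (isOpen_Ioo.mem_nhds ht) fun s hs => (hbranch s hs).symm)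
  rw [← hbranch t ht]
  exact (hBs t ht).sub (hasDerivAt_bCurve hint ht0 hrate)

end OnlinePolicy

lemma eq_integral_of_hasDerivAt_sub_div {D B' : ℝ → ℝ} {a T ε : ℝ} (haT : a ≤ T) (hε : 0 < ε)
    (hD : ContinuousOn D (Icc a T))
    (hderiv : ∀ t ∈ Ioo a T, HasDerivAt D (B' t - D t / (T - t + ε)) t)
    (hB' : ContinuousOn B' (Icc a T)) :
    D T = (∫ t in a..T, ε / (T - t + ε) * B' t) + ε / (T - a + ε) * D a := by
  have hu : ∀ t ∈ Icc a T, T - t + ε ≠ 0 := fun t ht => by linarith [ht.2]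
  have hquot : ∀ t ∈ Ioo a T,
      HasDerivAt (fun s => D s / (T - s + ε)) (B' t / (T - t + ε)) t := by
    intro t ht
    have hu' : HasDerivAt (fun s => T - s + ε) (-1) t := by
      simpa using ((hasDerivAt_id t).const_sub T).add_const ε
    refine ((hderiv t ht).div hu' (hu t (Ioo_subset_Icc_self ht))).congr_deriv ?_
    field_simp [hu t (Ioo_subset_Icc_self ht)]
    ring
  have hFTC := integral_eq_sub_of_hasDeriv_right_of_le haT (hD.div (by fun_prop) hu)
    (fun t ht => (hquot t ht).hasDerivWithinAt)
    ((hB'.div (by fun_prop) hu).intervalIntegrable_of_Icc haT)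
  have hpull : ∫ t in a..T, ε / (T - t + ε) * B' t = ε * ∫ t in a..T, B' t / (T - t + ε) := by
    rw [← intervalIntegral.integral_const_mul]
    exact integral_congr fun t _ => by ring
  rw [hpull, hFTC, Pi.div_apply, Pi.div_apply, sub_self, zero_add]
  field_simp [hu a (left_mem_Icc.2 haT)]
  ring

lemma integral_inv_sub_add {a T ε : ℝ} (haT : a ≤ T) (hε : 0 < ε) :
    ∫ t in a..T, (T - t + ε)⁻¹ = Real.log ((T - a + ε) / ε) := by
  calc ∫ t in a..T, (T - t + ε)⁻¹ = ∫ t in a..T, (T + ε - t)⁻¹ :=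
        integral_congr fun t _ => by ring_nf
    _ = ∫ x in T + ε - T..T + ε - a, x⁻¹ := integral_comp_sub_left (fun x => x⁻¹) (T + ε)
    _ = Real.log ((T - a + ε) / ε) := by
      rw [integral_inv_of_pos (by linarith) (by linarith)]
      ring_nf

lemma integral_div_mul_le_log {B' : ℝ → ℝ} {a T ε M : ℝ} (haT : a ≤ T) (hε : 0 < ε)
    (hB' : ContinuousOn B' (Icc a T)) (hM : ∀ t ∈ Icc a T, B' t ≤ M) :
    ∫ t in a..T, ε / (T - t + ε) * B' t ≤ ε * M * Real.log ((T - a + ε) / ε) := by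
  have hu : ∀ t ∈ Icc a T, 0 < T - t + ε := fun t ht => by linarith [ht.2]
  have hw : ContinuousOn (fun t => ε / (T - t + ε)) (Icc a T) :=
    continuousOn_const.div (by fun_prop) fun t ht => (hu t ht).ne'
  calc ∫ t in a..T, ε / (T - t + ε) * B' t ≤ ∫ t in a..T, ε / (T - t + ε) * M :=
        integral_mono_on haT ((hw.mul hB').intervalIntegrable_of_Icc haT)
          ((hw.mul continuousOn_const).intervalIntegrable_of_Icc haT) fun t ht =>
          mul_le_mul_of_nonneg_left (hM t ht) (div_pos hε (hu t ht)).le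
    _ = ε * M * ∫ t in a..T, (T - t + ε)⁻¹ := by
      rw [← intervalIntegral.integral_const_mul]
      exact integral_congr fun t _ => by ring
    _ = ε * M * Real.log ((T - a + ε) / ε) := by rw [integral_inv_sub_add haT hε]

lemma tendsto_mul_log_div_add_div_mul {c : ℝ} (hc : 0 < c) (M B : ℝ) :
    Tendsto (fun e : ℝ => e * M * Real.log ((c + e) / e) + e / (c + e) * B) (𝓝[>] 0) (𝓝 0) := by
  have hcont : ContinuousAt
      (fun e : ℝ => M * (e * Real.log (c + e) - e * Real.log e) + e / (c + e) * B) 0 := by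
    have hlog : ContinuousAt (fun e : ℝ => Real.log (c + e)) 0 :=
      (Real.continuousAt_log (by simpa using hc.ne')).comp (by fun_prop)
    exact (continuousAt_const.mul ((continuousAt_id.mul hlog).sub
      Real.continuous_mul_log.continuousAt)).add
      ((continuousAt_id.div (by fun_prop) (by simpa using hc.ne')).mul continuousAt_const)
  have hlim := hcont.tendsto.mono_left (nhdsWithin_le_nhds (s := Ioi 0))
  simp only [zero_mul, sub_self, mul_zero, zero_div, add_zero] at hlim
  refine hlim.congr' (eventually_mem_nhdsWithin.mono fun e (he : 0 < e) => ?_)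
  dsimp only
  rw [Real.log_div (by linarith) he.ne']
  ring

theorem online_data_branch_sends_all_data_general
    (r rinv Es Bs : ℝ → ℝ) (hr : RateFn r)
    (T ε : ℝ) (hε : 0 < ε)
    (hEsm : MonotoneOn Es (Set.Icc 0 T))
    (pon : ℝ → ℝ) (hon : IsOnline r rinv Es Bs T ε pon)
    (tn : ℝ) (htn : tn ∈ Set.Ico (0 : ℝ) T)
    (M : ℝ) (Bs' : ℝ → ℝ)
    (hBsd : ∀ t ∈ Set.Icc tn T, HasDerivAt Bs (Bs' t) t)
    (hBs'c : ContinuousOn Bs' (Set.Icc tn T))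
    (hBs'b : ∀ t ∈ Set.Icc tn T, 0 ≤ Bs' t ∧ Bs' t ≤ M)
    (hbranch : ∀ t ∈ Set.Ioo tn T,
      r (pon t) = (Bs t - bCurve r pon t) / (T - t + ε)) :
    Bs T - bCurve r pon T =
      (∫ t in tn..T, (ε / (T - t + ε)) * Bs' t) +
        (ε / (T - tn + ε)) * (Bs tn - bCurve r pon tn) ∧
    0 ≤ Bs T - bCurve r pon T ∧
    Bs T - bCurve r pon T ≤
      ε * M * Real.log ((T - tn + ε) / ε) + (ε / (T - tn + ε)) * Bs tn ∧
    Filter.Tendsto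
      (fun e : ℝ => e * M * Real.log ((T - tn + e) / e) + (e / (T - tn + e)) * Bs tn)
      (nhdsWithin 0 (Set.Ioi 0)) (nhds 0) := by
  obtain ⟨htn0, htnT⟩ := htn
  have hint := hon.integrableOn_rate hr hε hEsm
  have hrate0 : ∀ s ∈ Ico 0 T, 0 ≤ r (pon s) := fun s hs => hr.nonneg _ (hon.1 s hs)
  have hbacklog : ContinuousOn (fun t => Bs t - bCurve r pon t) (Icc tn T) := fun t ht =>
    (hBsd t ht).continuousAt.continuousWithinAt.sub
      ((continuousOn_bCurve hint (htn0.trans htnT.le)).mono (Icc_subset_Icc_left htn0) t ht)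
  have hidentity := eq_integral_of_hasDerivAt_sub_div htnT.le hε hbacklog
    (fun t ht => hasDerivAt_backlog_of_data_branch hint htn0 hε
      (fun s hs => hBsd s (Ioo_subset_Icc_self hs)) hbranch ht) hBs'c
  have hbacklog_nonneg : ∀ t ∈ Ioo tn T, 0 ≤ Bs t - bCurve r pon t := fun t ht => by
    have h := (le_div_iff₀ (by linarith [ht.2] : 0 < T - t + ε)).1
      (hbranch t ht ▸ hrate0 t ⟨htn0.trans ht.1.le, ht.2⟩)
    rwa [zero_mul] at h
  refine ⟨hidentity, ?_, ?_, tendsto_mul_log_div_add_div_mul (sub_pos.2 htnT) M (Bs tn)⟩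
  · exact ContinuousWithinAt.closure_le (f := fun _ => 0) (g := fun t => Bs t - bCurve r pon t)
      (by simp [closure_Ioo htnT.ne, htnT.le]) continuousWithinAt_const
      ((hbacklog T (right_mem_Icc.2 htnT.le)).mono Ioo_subset_Icc_self) hbacklog_nonneg
  · rw [hidentity]
    gcongr
    · exact integral_div_mul_le_log htnT.le hε hBs'c fun t ht => (hBs'b t ht).2
    · exact sub_le_self _ (integral_nonneg_of_nonneg_Ico hrate0 ⟨htn0, htnT⟩)

/-- if the online policy follows the data branch on `(t_n, T)`
and `B_s` is continuously differentiable there with `0 ≤ B_s′ ≤ M`, then the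
remaining data at the deadline satisfies the stated identity, is nonnegative, is
bounded by `ε·M·log((T−t_n+ε)/ε) + (ε/(T−t_n+ε))·B_s(t_n)`, and this bound tends
to `0` as `ε → 0⁺` (so in the limit the online policy transmits all the data). -/
theorem online_data_branch_sends_all_data
    (r rinv Es Bs : ℝ → ℝ) (hr : RateFn r)
    (hrinv_left : ∀ x : ℝ, 0 ≤ x → rinv (r x) = x)
    (hrinv_right : ∀ y : ℝ, 0 ≤ y → r (rinv y) = y)
    (T ε : ℝ) (hT : 0 < T) (hε : 0 < ε)
    (hEsm : MonotoneOn Es (Set.Icc 0 T)) (hBsm : MonotoneOn Bs (Set.Icc 0 T))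
    (hEs0 : ∀ t ∈ Set.Icc (0 : ℝ) T, 0 ≤ Es t)
    (hBs0 : ∀ t ∈ Set.Icc (0 : ℝ) T, 0 ≤ Bs t)
    (pon : ℝ → ℝ) (hon : IsOnline r rinv Es Bs T ε pon)
    (tn : ℝ) (htn : tn ∈ Set.Ico (0 : ℝ) T)
    (M : ℝ) (Bs' : ℝ → ℝ)
    (hBsd : ∀ t ∈ Set.Icc tn T, HasDerivAt Bs (Bs' t) t)
    (hBs'c : ContinuousOn Bs' (Set.Icc tn T))
    (hBs'b : ∀ t ∈ Set.Icc tn T, 0 ≤ Bs' t ∧ Bs' t ≤ M)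
    (hbranch : ∀ t ∈ Set.Ioo tn T,
      r (pon t) = (Bs t - bCurve r pon t) / (T - t + ε)) :
    Bs T - bCurve r pon T =
      (∫ t in tn..T, (ε / (T - t + ε)) * Bs' t) +
        (ε / (T - tn + ε)) * (Bs tn - bCurve r pon tn) ∧
    0 ≤ Bs T - bCurve r pon T ∧
    Bs T - bCurve r pon T ≤
      ε * M * Real.log ((T - tn + ε) / ε) + (ε / (T - tn + ε)) * Bs tn ∧
    Filter.Tendsto
      (fun e : ℝ => e * M * Real.log ((T - tn + e) / e) + (e / (T - tn + e)) * Bs tn)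
      (nhdsWithin 0 (Set.Ioi 0)) (nhds 0) :=
  online_data_branch_sends_all_data_general r rinv Es Bs hr T ε hε hEsm pon hon tn htn M Bs' hBsd
    hBs'c hBs'b hbranch
end

section
/- Let p_on be an online policy, nondecreasing at its continuity points, and let τ ∈ (0,T) be a point of continuity of p_on at which the data branch is active, i.e. r(p_on(τ)) = (B_s(τ) − B_on(τ)) / (T − τ + ε). Then B_on(T) ≥ ((T − τ)/(T − τ + ε))·B_s(τ). Consequently, since every feasible policy p satisfies ∫₀ᵀ r(p(t)) dt ≤ B_s(T), if B_off(T) = ∫₀ᵀ r(p(t)) dt > 0 for a feasible policy p and B_s(T) > 0, then B_on(T)/B_off(T) ≥ (B_s(τ)/B_s(T))·((T − τ)/(T − τ + ε)). -/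
/-!
On the data branch at `τ` the online policy has left exactly `B_s(τ) - B_on(τ)` to transmit and
spreads it at the constant rate `r (p τ) = (B_s(τ) - B_on(τ)) / (T - τ + ε)`. Since the policy is
nondecreasing, it transmits at least this rate for the remaining time `T - τ`, so
`B_on(T) ≥ B_on(τ) + (T - τ) (B_s(τ) - B_on(τ)) / (T - τ + ε) ≥ (T - τ) B_s(τ) / (T - τ + ε)`.
Data causality of a feasible policy at `T` turns this into the ratio bound. The integrals are
genuine (not junk) because the energy branch caps the online power by `E_s(T) / ε`.
-/

open MeasureTheory

open Set

theorem ae_restrict_Icc_of_forall_Ioo_notMem {P : ℝ → Prop} {a b : ℝ} {F : Set ℝ}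
    (hF : F.Countable) (h : ∀ t ∈ Ioo a b, t ∉ F → P t) :
    ∀ᵐ t ∂volume.restrict (Icc a b), P t := by
  have hnull : ∀ᵐ t, t ∉ insert a (insert b F) := ((hF.insert b).insert a).ae_notMem volume
  filter_upwards [ae_restrict_mem measurableSet_Icc, ae_restrict_of_ae hnull] with t ht htF
  simp only [mem_insert_iff, not_or] at htF
  exact h t ⟨lt_of_le_of_ne ht.1 (Ne.symm htF.1), lt_of_le_of_ne ht.2 htF.2.1⟩ htF.2.2

theorem intervalIntegrable_of_continuousAt_of_norm_le {f : ℝ → ℝ} {a b C : ℝ} {F : Set ℝ}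
    (hab : a ≤ b) (hF : F.Countable) (hcont : ∀ t ∈ Ioo a b, t ∉ F → ContinuousAt f t)
    (hbound : ∀ t ∈ Ioo a b, t ∉ F → ‖f t‖ ≤ C) : IntervalIntegrable f volume a b := by
  rw [intervalIntegrable_iff_integrableOn_Icc_of_le hab]
  have hset : Ioo a b \ F =ᵐ[volume] Icc a b :=
    (sdiff_null_ae_eq_self (hF.measure_zero volume)).trans Ioo_ae_eq_Icc
  have hmeas : AEStronglyMeasurable f (volume.restrict (Icc a b)) := by
    rw [← Measure.restrict_congr_set hset]
    exact ContinuousOn.aestronglyMeasurable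
      (fun t ht => (hcont t ht.1 ht.2).continuousWithinAt)
      (measurableSet_Ioo.diff hF.measurableSet)
  exact IntegrableOn.of_bound measure_Icc_lt_top hmeas C
    (ae_restrict_Icc_of_forall_Ioo_notMem hF hbound)

namespace IsOnline

variable {r rinv Es Bs p : ℝ → ℝ} {T ε : ℝ}

theorem bCurve_nonneg (hr : RateFn r) (hp : IsOnline r rinv Es Bs T ε p) {t : ℝ}
    (ht : t ∈ Icc 0 T) : 0 ≤ bCurve r p t :=
  intervalIntegral.integral_nonneg_of_ae_restrict ht.1 <|
    ae_restrict_Icc_of_forall_Ioo_notMem countable_empty fun u hu _ =>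
      hr.nonneg _ (hp.1 u ⟨hu.1.le, hu.2.trans_le ht.2⟩)

theorem le_div_of_continuousAt_s18 (hp : IsOnline r rinv Es Bs T ε p) (hε : 0 < ε)
    (hEs : MonotoneOn Es (Icc 0 T)) {t : ℝ} (ht : t ∈ Ico 0 T) (hc : ContinuousAt p t) :
    p t ≤ Es T / ε := by
  have hE : 0 ≤ eCurve p t :=
    intervalIntegral.integral_nonneg ht.1 fun u hu => hp.1 u ⟨hu.1, hu.2.trans_lt ht.2⟩
  have hEs_le : Es t ≤ Es T := hEs ⟨ht.1, ht.2.le⟩ ⟨ht.1.trans ht.2.le, le_rfl⟩ ht.2.le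
  have hd : ε ≤ T - t + ε := by linarith [ht.2]
  have hle : p t ≤ (Es t - eCurve p t) / (T - t + ε) :=
    (hp.2.2 t ht hc).trans_le (min_le_right _ _)
  have hnum : 0 ≤ Es t - eCurve p t := by
    simpa using (le_div_iff₀ (hε.trans_le hd)).mp ((hp.1 t ht).trans hle)
  calc p t ≤ (Es t - eCurve p t) / (T - t + ε) := hle
    _ ≤ (Es t - eCurve p t) / ε := div_le_div_of_nonneg_left hnum hε hd
    _ ≤ Es T / ε := div_le_div_of_nonneg_right (by linarith) hε.le

theorem intervalIntegrable_rate (hr : RateFn r) (hp : IsOnline r rinv Es Bs T ε p)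
    (hε : 0 < ε) (hEs : MonotoneOn Es (Icc 0 T)) (hT : 0 ≤ T) :
    IntervalIntegrable (fun s => r (p s)) volume 0 T := by
  obtain ⟨F, hF⟩ := hp.2.1
  refine intervalIntegrable_of_continuousAt_of_norm_le hT F.countable_toSet
    (fun t ht htF => hr.cont.continuousAt.comp (hF t (Ioo_subset_Ico_self ht) htF))
    (C := r (Es T / ε)) fun t ht htF => ?_
  have ht' : t ∈ Ico 0 T := Ioo_subset_Ico_self ht
  have hle := hp.le_div_of_continuousAt_s18 hε hEs ht' (hF t ht' htF)
  rw [Real.norm_of_nonneg (hr.nonneg _ (hp.1 t ht'))]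
  exact hr.mono.monotoneOn (hp.1 t ht') ((hp.1 t ht').trans hle) hle

theorem mul_rate_le_integral_rate (hr : RateFn r) (hp : IsOnline r rinv Es Bs T ε p)
    (hmono : ∀ s ∈ Ico (0 : ℝ) T, ∀ t ∈ Ico (0 : ℝ) T, s < t →
      ContinuousAt p s → ContinuousAt p t → p s ≤ p t)
    {τ : ℝ} (hτ : τ ∈ Ico 0 T) (hcτ : ContinuousAt p τ)
    (hint : IntervalIntegrable (fun s => r (p s)) volume τ T) :
    (T - τ) * r (p τ) ≤ ∫ s in τ..T, r (p s) := by
  obtain ⟨F, hF⟩ := hp.2.1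
  have hle : ∀ᵐ t ∂volume.restrict (Icc τ T), r (p τ) ≤ r (p t) :=
    ae_restrict_Icc_of_forall_Ioo_notMem F.countable_toSet fun t ht htF => by
      have ht' : t ∈ Ico 0 T := ⟨hτ.1.trans ht.1.le, ht.2⟩
      exact hr.mono.monotoneOn (hp.1 τ hτ) (hp.1 t ht')
        (hmono τ hτ t ht' ht.1 hcτ (hF t ht' htF))
  simpa using intervalIntegral.integral_mono_ae_restrict hτ.2.le intervalIntegrable_const hint hle

theorem le_bCurve_of_data_branch (hr : RateFn r) (hp : IsOnline r rinv Es Bs T ε p)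
    (hε : 0 < ε) (hEs : MonotoneOn Es (Icc 0 T))
    (hmono : ∀ s ∈ Ico (0 : ℝ) T, ∀ t ∈ Ico (0 : ℝ) T, s < t →
      ContinuousAt p s → ContinuousAt p t → p s ≤ p t)
    {τ : ℝ} (hτ : τ ∈ Ioo 0 T) (hcτ : ContinuousAt p τ)
    (hbranch : r (p τ) = (Bs τ - bCurve r p τ) / (T - τ + ε)) :
    ((T - τ) / (T - τ + ε)) * Bs τ ≤ bCurve r p T := by
  have hint := hp.intervalIntegrable_rate hr hε hEs (hτ.1.trans hτ.2).le
  have hτ_mem : τ ∈ uIcc 0 T := mem_uIcc_of_le hτ.1.le hτ.2.le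
  have hint_tail := hint.mono_set (uIcc_subset_uIcc_right hτ_mem)
  have hsplit : bCurve r p T = bCurve r p τ + ∫ s in τ..T, r (p s) :=
    (intervalIntegral.integral_add_adjacent_intervals
      (hint.mono_set (uIcc_subset_uIcc_left hτ_mem)) hint_tail).symm
  have htail := hp.mul_rate_le_integral_rate hr hmono (Ioo_subset_Ico_self hτ) hcτ hint_tail
  have hBτ : 0 ≤ bCurve r p τ := hp.bCurve_nonneg hr ⟨hτ.1.le, hτ.2.le⟩
  have hd : 0 < T - τ + ε := by linarith [hτ.2]
  rw [hbranch] at htail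
  calc ((T - τ) / (T - τ + ε)) * Bs τ
      = bCurve r p τ + (T - τ) * ((Bs τ - bCurve r p τ) / (T - τ + ε))
          - ε * bCurve r p τ / (T - τ + ε) := by
        field_simp
        ring
    _ ≤ bCurve r p τ + (T - τ) * ((Bs τ - bCurve r p τ) / (T - τ + ε)) :=
        sub_le_self _ (by positivity)
    _ ≤ bCurve r p T := by rw [hsplit]; linarith

end IsOnline

theorem online_ratio_data_branch_general
    (r rinv Es Bs : ℝ → ℝ) (hr : RateFn r)
    (T ε : ℝ) (hε : 0 < ε)
    (hEsm : MonotoneOn Es (Set.Icc 0 T))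
    (pon : ℝ → ℝ) (hon : IsOnline r rinv Es Bs T ε pon)
    (hmono : ∀ s ∈ Set.Ico (0 : ℝ) T, ∀ t ∈ Set.Ico (0 : ℝ) T, s < t →
      ContinuousAt pon s → ContinuousAt pon t → pon s ≤ pon t)
    (τ : ℝ) (hτ : τ ∈ Set.Ioo (0 : ℝ) T) (hcτ : ContinuousAt pon τ)
    (hbranch : r (pon τ) = (Bs τ - bCurve r pon τ) / (T - τ + ε)) :
    ((T - τ) / (T - τ + ε)) * Bs τ ≤ bCurve r pon T ∧
    (∀ p : ℝ → ℝ, Feasible r Es Bs T p → bCurve r p T ≤ Bs T) ∧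
    (∀ p : ℝ → ℝ, Feasible r Es Bs T p → 0 < bCurve r p T → 0 < Bs T →
      (Bs τ / Bs T) * ((T - τ) / (T - τ + ε)) ≤ bCurve r pon T / bCurve r p T) := by
  have hT : T ∈ Icc 0 T := ⟨(hτ.1.trans hτ.2).le, le_rfl⟩
  have hon_bound := hon.le_bCurve_of_data_branch hr hε hEsm hmono hτ hcτ hbranch
  have hoff_bound : ∀ p, Feasible r Es Bs T p → bCurve r p T ≤ Bs T :=
    fun p hp => (hp.2.2 T hT).2
  refine ⟨hon_bound, hoff_bound, fun p hp hoff hBsT => ?_⟩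
  have hon_nonneg : 0 ≤ bCurve r pon T := hon.bCurve_nonneg hr hT
  calc (Bs τ / Bs T) * ((T - τ) / (T - τ + ε))
      = ((T - τ) / (T - τ + ε)) * Bs τ / Bs T := by ring
    _ ≤ bCurve r pon T / Bs T := by gcongr
    _ ≤ bCurve r pon T / bCurve r p T := by gcongr; exact hoff_bound p hp

/-- if the online policy (nondecreasing at continuity points) is
on the data branch at a continuity point `τ ∈ (0,T)`, then
`B_on(T) ≥ ((T−τ)/(T−τ+ε))·B_s(τ)`; since every feasible policy transmits at most
`B_s(T)` data, the online-to-offline data ratio is at least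
`(B_s(τ)/B_s(T))·((T−τ)/(T−τ+ε))`. -/
theorem online_ratio_data_branch
    (r rinv Es Bs : ℝ → ℝ) (hr : RateFn r)
    (hrinv_left : ∀ x : ℝ, 0 ≤ x → rinv (r x) = x)
    (hrinv_right : ∀ y : ℝ, 0 ≤ y → r (rinv y) = y)
    (T ε : ℝ) (hT : 0 < T) (hε : 0 < ε)
    (hEsm : MonotoneOn Es (Set.Icc 0 T)) (hBsm : MonotoneOn Bs (Set.Icc 0 T))
    (hEs0 : ∀ t ∈ Set.Icc (0 : ℝ) T, 0 ≤ Es t)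
    (hBs0 : ∀ t ∈ Set.Icc (0 : ℝ) T, 0 ≤ Bs t)
    (pon : ℝ → ℝ) (hon : IsOnline r rinv Es Bs T ε pon)
    (hmono : ∀ s ∈ Set.Ico (0 : ℝ) T, ∀ t ∈ Set.Ico (0 : ℝ) T, s < t →
      ContinuousAt pon s → ContinuousAt pon t → pon s ≤ pon t)
    (τ : ℝ) (hτ : τ ∈ Set.Ioo (0 : ℝ) T) (hcτ : ContinuousAt pon τ)
    (hbranch : r (pon τ) = (Bs τ - bCurve r pon τ) / (T - τ + ε)) :
    ((T - τ) / (T - τ + ε)) * Bs τ ≤ bCurve r pon T ∧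
    (∀ p : ℝ → ℝ, Feasible r Es Bs T p → bCurve r p T ≤ Bs T) ∧
    (∀ p : ℝ → ℝ, Feasible r Es Bs T p → 0 < bCurve r p T → 0 < Bs T →
      (Bs τ / Bs T) * ((T - τ) / (T - τ + ε)) ≤ bCurve r pon T / bCurve r p T) :=
  online_ratio_data_branch_general r rinv Es Bs hr T ε hε hEsm pon hon hmono τ hτ hcτ hbranch
end
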